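/- Let ψ : ℝ → EuclideanSpace ℝ (Fin n) be continuous, ρ > 0, t_c > 0, δ > 0, and suppose the matrix (∫₀^{t_c} vecMulVec (ψ(s)) (ψ(s)) ds) − δ • 1 is positive semidefinite (ψ is interval exciting on [0, t_c] with level δ). If Φ : ℝ → Matrix (Fin n) (Fin n) ℝ is differentiable with Φ'(t) = −ρ • Φ(t) + vecMulVec (ψ(t)) (ψ(t)) for all t ≥ 0 and Φ(0) = 0, then Φ(t_c) − (δ * Real.exp(−ρ t_c)) • 1 is positive semidefinite. -/

import Mathlib

/-!
Variation of constants gives `e^{ρ t_c} Φ(t_c) = ∫₀^{t_c} e^{ρ s} ψψᵀ ds`. In the Loewner order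
`ψψᵀ ⪰ 0` and `e^{ρ s} ≥ 1` for `s ≥ 0`, so this integral dominates `∫₀^{t_c} ψψᵀ ds ⪰ δ I`;
the comparison of integrals is legitimate because the positive semidefinite cone is closed.
-/

open Matrix
open scoped RealInnerProductSpace

attribute [local instance] Matrix.normedAddCommGroup Matrix.normedSpace

def ev {n : ℕ} (x : EuclideanSpace ℝ (Fin n)) : Fin n → ℝ :=
  (WithLp.equiv 2 (Fin n → ℝ)) x

theorem continuous_ev {n : ℕ} : Continuous (ev (n := n)) :=
  PiLp.continuous_ofLp 2 _

open Set
open scoped ComplexOrder MatrixOrder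

theorem Matrix.isClosed_setOf_posSemidef {n 𝕜 : Type*} [Fintype n] [RCLike 𝕜] :
    IsClosed {A : Matrix n n 𝕜 | A.PosSemidef} := by
  simp only [posSemidef_iff_dotProduct_mulVec, ofPred_and, ofPred_forall]
  refine (isClosed_eq (by fun_prop) continuous_id).inter (isClosed_iInter fun x => ?_)
  exact isClosed_le continuous_const (by fun_prop)

/- Stated for the topology of the local matrix norm: it equals the product topology only up to
unfolding, which instance search does not do. -/
instance Matrix.orderClosedTopology {n 𝕜 : Type*} [Fintype n] [RCLike 𝕜] :
    @OrderClosedTopology (Matrix n n 𝕜) PseudoMetricSpace.toUniformSpace.toTopologicalSpace _ :=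
  ⟨isClosed_le_of_isClosed_nonneg <| by
    simp only [nonneg_iff_posSemidef]; exact Matrix.isClosed_setOf_posSemidef⟩

theorem intervalIntegral.integral_mono_on_of_closedIciTopology {E : Type*}
    [NormedAddCommGroup E] [NormedSpace ℝ E] [PartialOrder E] [IsOrderedAddMonoid E]
    [IsOrderedModule ℝ E] [ClosedIciTopology E] {f g : ℝ → E} {a b : ℝ} (hab : a ≤ b)
    (hf : IntervalIntegrable f MeasureTheory.volume a b)
    (hg : IntervalIntegrable g MeasureTheory.volume a b) (h : ∀ x ∈ Icc a b, f x ≤ g x) :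
    ∫ x in a..b, f x ≤ ∫ x in a..b, g x := by
  rw [intervalIntegral.integral_of_le hab, intervalIntegral.integral_of_le hab]
  rw [intervalIntegrable_iff_integrableOn_Ioc_of_le hab] at hf hg
  exact MeasureTheory.setIntegral_mono_on hf hg measurableSet_Ioc
    fun x hx => h x (Ioc_subset_Icc_self hx)

theorem exp_mul_smul_eq_add_integral_of_hasDerivAt {E : Type*} [NormedAddCommGroup E]
    [NormedSpace ℝ E] [CompleteSpace E] {Φ f : ℝ → E} {ρ t : ℝ} (ht : 0 ≤ t)
    (hf : Continuous f) (hΦ : ∀ s ∈ Icc 0 t, HasDerivAt Φ ((-ρ) • Φ s + f s) s) :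
    Real.exp (ρ * t) • Φ t = Φ 0 + ∫ s in 0..t, Real.exp (ρ * s) • f s := by
  have hderiv : ∀ s ∈ uIcc 0 t,
      HasDerivAt (fun s => Real.exp (ρ * s) • Φ s) (Real.exp (ρ * s) • f s) s := by
    intro s hs
    rw [uIcc_of_le ht] at hs
    refine (((hasDerivAt_id s).const_mul ρ).exp.smul (hΦ s hs)).congr_deriv ?_
    simp only [id, mul_one, smul_add, smul_smul]
    module
  rw [intervalIntegral.integral_eq_sub_of_hasDerivAt hderiv
    (Continuous.intervalIntegrable (by fun_prop) _ _)]
  simp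

theorem stmt17_general {n : ℕ} (ψ : ℝ → EuclideanSpace ℝ (Fin n)) (hψ : Continuous ψ)
    (ρ tc δ : ℝ) (hρ : 0 < ρ) (htc : 0 < tc)
    (hIE : ((∫ s in (0:ℝ)..tc, vecMulVec (ev (ψ s)) (ev (ψ s))) -
      δ • (1 : Matrix (Fin n) (Fin n) ℝ)).PosSemidef)
    (Φ : ℝ → Matrix (Fin n) (Fin n) ℝ) (hΦ : Differentiable ℝ Φ)
    (hΦd : ∀ t ≥ (0:ℝ), deriv Φ t = (-ρ) • Φ t + vecMulVec (ev (ψ t)) (ev (ψ t)))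
    (hΦ0 : Φ 0 = 0) :
    (Φ tc - (δ * Real.exp (-ρ * tc)) • (1 : Matrix (Fin n) (Fin n) ℝ)).PosSemidef := by
  set P : ℝ → Matrix (Fin n) (Fin n) ℝ := fun s => vecMulVec (ev (ψ s)) (ev (ψ s))
  have hP : Continuous P := (continuous_ev.comp hψ).matrix_vecMulVec (continuous_ev.comp hψ)
  have hvc : Real.exp (ρ * tc) • Φ tc = ∫ s in 0..tc, Real.exp (ρ * s) • P s := by
    have := exp_mul_smul_eq_add_integral_of_hasDerivAt htc.le hP
      fun s hs => hΦd s hs.1 ▸ (hΦ s).hasDerivAt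
    rwa [hΦ0, zero_add] at this
  have hweight : ∫ s in 0..tc, P s ≤ ∫ s in 0..tc, Real.exp (ρ * s) • P s :=
    intervalIntegral.integral_mono_on_of_closedIciTopology htc.le (hP.intervalIntegrable _ _)
      (Continuous.intervalIntegrable (by fun_prop) _ _) fun s hs =>
        le_smul_of_one_le_left (by simpa using (posSemidef_vecMulVec_self_star (ev (ψ s))).nonneg)
          (Real.one_le_exp (mul_nonneg hρ.le hs.1))
  rw [← Matrix.le_iff] at hIE ⊢
  calc (δ * Real.exp (-ρ * tc)) • 1
      = Real.exp (-ρ * tc) • δ • (1 : Matrix (Fin n) (Fin n) ℝ) := by rw [mul_comm, mul_smul]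
    _ ≤ Real.exp (-ρ * tc) • Real.exp (ρ * tc) • Φ tc :=
        smul_le_smul_of_nonneg_left (hvc ▸ hIE.trans hweight) (Real.exp_pos _).le
    _ = Φ tc := by rw [smul_smul, ← Real.exp_add]; simp

/-- Excitation transfer (proof of Proposition 5): interval excitation of `ψ`
on `[0, t_c]` with level `δ` gives `Φ(t_c) ⪰ δ e^{−ρ t_c} I` for the
Kreisselmeier filter `Φ̇ = −ρΦ + ψψᵀ`, `Φ(0) = 0`. -/
theorem stmt17 {n : ℕ} (ψ : ℝ → EuclideanSpace ℝ (Fin n)) (hψ : Continuous ψ)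
    (ρ tc δ : ℝ) (hρ : 0 < ρ) (htc : 0 < tc) (hδ : 0 < δ)
    (hIE : ((∫ s in (0:ℝ)..tc, vecMulVec (ev (ψ s)) (ev (ψ s))) -
      δ • (1 : Matrix (Fin n) (Fin n) ℝ)).PosSemidef)
    (Φ : ℝ → Matrix (Fin n) (Fin n) ℝ) (hΦ : Differentiable ℝ Φ)
    (hΦd : ∀ t ≥ (0:ℝ), deriv Φ t = (-ρ) • Φ t + vecMulVec (ev (ψ t)) (ev (ψ t)))
    (hΦ0 : Φ 0 = 0) :
    (Φ tc - (δ * Real.exp (-ρ * tc)) • (1 : Matrix (Fin n) (Fin n) ℝ)).PosSemidef :=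
  stmt17_general ψ hψ ρ tc δ hρ htc hIE Φ hΦ hΦd hΦ0
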